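/- arXiv:2411.00012 — 2 statements merged into one kernel-verified Lean document; each statement's English description precedes it below -/
import Mathlib

section
/- If p is a prime and n a positive integer such that p² divides ∏_{k=1}^n (k²+1), then p < 2n. -/
/-! If `2n ≤ p` and `p²` divides the product, either `p²` divides a single factor
`k² + 1 ≤ n² + 1 < p²`, or `p` divides two factors `i² + 1` and `j² + 1` with `i ≠ j`, hence
divides `(i + j)(i - j)`, which forces `p ≤ i + j < 2n`. -/

theorem Prime.sq_dvd_finsetProd_cases {ι M : Type*} [CommMonoidWithZero M] [IsCancelMulZero M]
    {p : M} (hp : Prime p) {s : Finset ι} {f : ι → M} (h : p ^ 2 ∣ ∏ i ∈ s, f i) :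
    (∃ i ∈ s, p ^ 2 ∣ f i) ∨ ∃ i ∈ s, ∃ j ∈ s, i ≠ j ∧ p ∣ f i ∧ p ∣ f j := by
  classical
  induction s using Finset.induction_on with
  | empty =>
    exact absurd ((dvd_pow_self p two_ne_zero).trans h) (by simpa using hp.not_dvd_one)
  | insert a s has ih =>
    rw [Finset.prod_insert has] at h
    by_cases hpa : p ∣ f a
    · by_cases hps : p ∣ ∏ i ∈ s, f i
      · obtain ⟨j, hj, hpj⟩ := (hp.dvd_finsetProd_iff f).mp hps
        exact .inr ⟨a, s.mem_insert_self a, j, s.mem_insert_of_mem hj,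
          fun hja => has (hja ▸ hj), hpa, hpj⟩
      · exact .inl ⟨a, s.mem_insert_self a, hp.pow_dvd_of_dvd_mul_right 2 hps h⟩
    · rcases ih (hp.pow_dvd_of_dvd_mul_left 2 hpa h) with
        ⟨i, hi, hpi⟩ | ⟨i, hi, j, hj, hij, hpi, hpj⟩
      · exact .inl ⟨i, s.mem_insert_of_mem hi, hpi⟩
      · exact .inr ⟨i, s.mem_insert_of_mem hi, j, s.mem_insert_of_mem hj, hij, hpi, hpj⟩

theorem Nat.Prime.le_add_of_dvd_sq_add_one {p a b : ℕ} (hp : p.Prime) (hab : a ≠ b)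
    (ha : p ∣ a ^ 2 + 1) (hb : p ∣ b ^ 2 + 1) : p ≤ a + b := by
  wlog hba : b < a generalizing a b
  · rw [add_comm]
    exact this hab.symm hb ha (by omega)
  have hdiff : p ∣ (a + b) * (a - b) := by
    rw [← Nat.sq_sub_sq, ← Nat.add_sub_add_right (a ^ 2) 1 (b ^ 2)]
    exact Nat.dvd_sub ha hb
  rcases hp.dvd_mul.mp hdiff with hsum | hsub
  · exact Nat.le_of_dvd (by omega) hsum
  · exact (Nat.le_of_dvd (by omega) hsub).trans (by omega)

theorem stmt_2_general (p n : ℕ) (hp : p.Prime)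
    (h : p ^ 2 ∣ ∏ k ∈ Finset.Icc 1 n, (k ^ 2 + 1)) : p < 2 * n := by
  by_contra! hle
  rcases hp.prime.sq_dvd_finsetProd_cases h with ⟨k, hk, hsq⟩ | ⟨i, hi, j, hj, hij, hpi, hpj⟩
  · obtain ⟨hk1, hkn⟩ := Finset.mem_Icc.mp hk
    have := Nat.le_of_dvd (by positivity) hsq
    nlinarith
  · have := hp.le_add_of_dvd_sq_add_one hij hpi hpj
    grind

theorem stmt_2 (p n : ℕ) (hp : p.Prime) (hn : 0 < n)
    (h : p ^ 2 ∣ ∏ k ∈ Finset.Icc 1 n, (k ^ 2 + 1)) : p < 2 * n :=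
  stmt_2_general p n hp h
end

section
/- If p is a prime with p > n, then the p-adic valuation of ∏_{k=1}^n (k²+1) is at most 2. -/
/-!
For `k < p` we have `k ^ 2 + 1 < p ^ 2`, so each factor contributes at most one `p`, and only when
`p ∣ k ^ 2 + 1`. Since `1 ≤ k ≤ n < p` the `k` are distinct residues mod `p`, and those with
`p ∣ k ^ 2 + 1` are roots of `X ^ 2 + 1` over `ZMod p`, of which there are at most two.
-/

open Finset Polynomial

theorem Nat.factorization_le_one_of_lt_sq {p m : ℕ} (hp : p.Prime) (hm : m ≠ 0) (hmp : m < p ^ 2) :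
    m.factorization p ≤ 1 := by
  by_contra! h
  exact hmp.not_ge (Nat.le_of_dvd (Nat.pos_of_ne_zero hm) ((hp.pow_dvd_iff_le_factorization hm).mpr h))

theorem factorization_sq_add_one_le_ite {p k : ℕ} (hp : p.Prime) (hkp : k < p) :
    (k ^ 2 + 1).factorization p ≤ if p ∣ k ^ 2 + 1 then 1 else 0 := by
  split_ifs with hdvd
  · have hp2 := hp.two_le
    exact Nat.factorization_le_one_of_lt_sq hp (by positivity) (by nlinarith)
  · exact (Nat.factorization_eq_zero_of_not_dvd hdvd).le

theorem card_filter_range_isRoot_le_natDegree {p : ℕ} [Fact p.Prime] {f : (ZMod p)[X]}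
    (hf : f ≠ 0) : #{k ∈ range p | f.IsRoot ((k : ℕ) : ZMod p)} ≤ f.natDegree := by
  have hmaps : Set.MapsTo (fun k : ℕ => (k : ZMod p)) ↑{k ∈ range p | f.IsRoot ((k : ℕ) : ZMod p)}
      ↑f.roots.toFinset := by
    intro k hk
    simp only [coe_filter, Set.mem_ofPred_eq] at hk
    simpa [Multiset.mem_toFinset, mem_roots hf] using hk.2
  have hinj : Set.InjOn (fun k : ℕ => (k : ZMod p)) ↑{k ∈ range p | f.IsRoot ((k : ℕ) : ZMod p)} := by
    intro a ha b hb hab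
    simp only [coe_filter, mem_range, Set.mem_ofPred_eq] at ha hb
    simpa [ZMod.val_cast_of_lt ha.1, ZMod.val_cast_of_lt hb.1] using congrArg ZMod.val hab
  calc #{k ∈ range p | f.IsRoot ((k : ℕ) : ZMod p)} ≤ #f.roots.toFinset :=
        card_le_card_of_injOn _ hmaps hinj
    _ ≤ Multiset.card f.roots := Multiset.toFinset_card_le _
    _ ≤ f.natDegree := card_roots' f

theorem card_filter_range_dvd_sq_add_one_le_two {p : ℕ} (hp : p.Prime) :
    #{k ∈ range p | p ∣ k ^ 2 + 1} ≤ 2 := by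
  have : Fact p.Prime := ⟨hp⟩
  have hdeg : (X ^ 2 + 1 : (ZMod p)[X]).natDegree = 2 := by compute_degree!
  have hne : (X ^ 2 + 1 : (ZMod p)[X]) ≠ 0 := fun h => by simp [h] at hdeg
  have hroot : ∀ k : ℕ, p ∣ k ^ 2 + 1 ↔ (X ^ 2 + 1 : (ZMod p)[X]).IsRoot (k : ZMod p) := by
    intro k
    rw [← ZMod.natCast_eq_zero_iff]
    simp
  simpa only [hroot, hdeg] using card_filter_range_isRoot_le_natDegree hne

theorem stmt_13_general (p n : ℕ) (hp : p.Prime) (hpn : n < p) :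
    (∏ k ∈ Finset.Icc 1 n, (k ^ 2 + 1)).factorization p ≤ 2 := by
  rw [Nat.factorization_prod (fun k _ => by positivity), Finsupp.finsetSum_apply]
  have hsub : Icc 1 n ⊆ range p := fun k hk => mem_range.mpr ((mem_Icc.mp hk).2.trans_lt hpn)
  calc ∑ k ∈ Icc 1 n, (k ^ 2 + 1).factorization p
      ≤ ∑ k ∈ Icc 1 n, if p ∣ k ^ 2 + 1 then 1 else 0 := by
        gcongr with k hk
        exact factorization_sq_add_one_le_ite hp (mem_range.mp (hsub hk))
    _ = #{k ∈ Icc 1 n | p ∣ k ^ 2 + 1} := (card_filter _ _).symm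
    _ ≤ #{k ∈ range p | p ∣ k ^ 2 + 1} := card_le_card (filter_subset_filter _ hsub)
    _ ≤ 2 := card_filter_range_dvd_sq_add_one_le_two hp

theorem stmt_13 (p n : ℕ) (hp : p.Prime) (hn : 0 < n) (hpn : n < p) :
    (∏ k ∈ Finset.Icc 1 n, (k ^ 2 + 1)).factorization p ≤ 2 :=
  stmt_13_general p n hp hpn
end
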